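/- Let A be a commutative ring and B a commutative A-algebra such that for every A-module M, B ⊗_A M = 0 implies M = 0. Then: (1) if p : M → N is an A-linear map and B ⊗_A p is surjective, then p is surjective; (2) if B ⊗_A M is a finitely generated B-module, then M is a finitely generated A-module; (3) if M is a flat A-module and B ⊗_A M is a finitely presented B-module, then M is a finitely presented A-module. -/

import Mathlib

/-!
Base change along `A → B` is right exact, so the cokernel of `p` is killed by `B ⊗[A] -` as
soon as `B ⊗ p` is surjective, and hence vanishes. Finitely many generators of `B ⊗[A] M` come
from a finitely generated submodule `M₀ ≤ M`, so `M₀ → M` is surjective by the first part. For a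
flat `M` and a presentation `0 → K → Aⁿ → M → 0`, flatness of `M` keeps the sequence exact after
base change, so `B ⊗[A] K` is the kernel of `Bⁿ → B ⊗[A] M`; this is finitely generated since
`B ⊗[A] M` is finitely presented, and the second part makes `K` finitely generated.
-/

open Function TensorProduct LinearMap

def BaseChangeReflectsZero.{w, u, v} (A : Type u) (B : Type v) [CommRing A] [CommRing B]
    [Algebra A B] : Prop :=
  ∀ (M : Type w) [AddCommGroup M] [Module A M], Subsingleton (B ⊗[A] M) → Subsingleton M

section

variable {R S N P : Type*} [CommRing R] [CommRing S] [Algebra R S]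
  [AddCommGroup N] [Module R N] [AddCommGroup P] [Module R P]

noncomputable def LinearMap.baseChangeKerEquivOfFlat [Module.Flat R P] (f : N →ₗ[R] P)
    (hf : Surjective f) : S ⊗[R] ker f ≃ₗ[S] ker (f.baseChange S) :=
  have hinj : Injective ((ker f).subtype.baseChange S) := by
    rw [baseChange_eq_ltensor]
    exact lTensor_injective_of_exact_of_flat f hf _ (ker f).injective_subtype
      f.exact_subtype_ker_map S
  have hexact : Exact ((ker f).subtype.baseChange S) (f.baseChange S) := by
    rw [baseChange_eq_ltensor, baseChange_eq_ltensor]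
    exact lTensor_exact S f.exact_subtype_ker_map hf
  (LinearEquiv.ofInjective _ hinj).trans (LinearEquiv.ofEq _ _ (exact_iff.mp hexact).symm)

end

namespace BaseChangeReflectsZero

universe u v w

variable {A : Type u} {B : Type v} [CommRing A] [CommRing B] [Algebra A B]

theorem surjective_of_surjective_lTensor (h : BaseChangeReflectsZero.{w} A B) {M : Type*}
    {N : Type w} [AddCommGroup M] [Module A M] [AddCommGroup N] [Module A N] (p : M →ₗ[A] N)
    (hp : Surjective (p.lTensor B)) : Surjective p := by
  have hexact := lTensor_exact B (exact_map_mkQ_range p) (Submodule.mkQ_surjective _)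
  have hcoker : Subsingleton (B ⊗[A] (N ⧸ range p)) := by
    refine subsingleton_of_forall_eq 0 fun y => ?_
    obtain ⟨x, rfl⟩ := lTensor_surjective B (Submodule.mkQ_surjective _) y
    obtain ⟨z, rfl⟩ := hp x
    exact hexact.apply_apply_eq_zero z
  exact range_eq_top.mp (Submodule.Quotient.subsingleton_iff.mp (h _ hcoker))

theorem finite_of_finite_tensorProduct (h : BaseChangeReflectsZero.{w} A B) {M : Type w}
    [AddCommGroup M] [Module A M] [Module.Finite B (B ⊗[A] M)] : Module.Finite A M := by
  obtain ⟨s, hs⟩ := Module.Finite.fg_top (R := B) (M := B ⊗[A] M)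
  obtain ⟨M₀, hM₀, hsM₀⟩ := exists_finite_submodule_right_of_setFinite (R := A) _ s.finite_toSet
  have hsurj : Surjective (M₀.subtype.lTensor B) := by
    rw [← baseChange_eq_ltensor, ← range_eq_top, eq_top_iff, ← hs, Submodule.span_le]
    intro x hx
    obtain ⟨y, hy⟩ := hsM₀ hx
    exact ⟨y, by rw [baseChange_eq_ltensor]; exact hy⟩
  exact Module.Finite.of_surjective M₀.subtype (h.surjective_of_surjective_lTensor _ hsurj)

theorem finitePresentation_of_flat (h : BaseChangeReflectsZero.{u} A B) {M : Type u}
    [AddCommGroup M] [Module A M] [Module.Flat A M] [Module.FinitePresentation B (B ⊗[A] M)] :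
    Module.FinitePresentation A M := by
  have := h.finite_of_finite_tensorProduct (M := M)
  obtain ⟨n, f, hf⟩ := Module.Finite.exists_fin' A M
  have : Module.Finite B (ker (f.baseChange B)) := .of_fg <|
    Module.FinitePresentation.fg_ker _ (by rw [baseChange_eq_ltensor]; exact lTensor_surjective B hf)
  have : Module.Finite B (B ⊗[A] ker f) := .equiv (f.baseChangeKerEquivOfFlat hf).symm
  exact Module.finitePresentation_of_free_of_surjective f hf
    (Module.Finite.iff_fg.mp (h.finite_of_finite_tensorProduct (M := ker f)))

end BaseChangeReflectsZero

theorem stmt_15 {A B : Type} [CommRing A] [CommRing B] [Algebra A B]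
    (hdet : ∀ (M : Type) (_ : AddCommGroup M) (_ : Module A M),
      Subsingleton (B ⊗[A] M) → Subsingleton M) :
    (∀ (M N : Type) (_ : AddCommGroup M) (_ : Module A M)
        (_ : AddCommGroup N) (_ : Module A N) (p : M →ₗ[A] N),
      Surjective (LinearMap.lTensor B p) → Surjective p) ∧
    (∀ (M : Type) (_ : AddCommGroup M) (_ : Module A M),
      Module.Finite B (B ⊗[A] M) → Module.Finite A M) ∧
    (∀ (M : Type) (_ : AddCommGroup M) (_ : Module A M),
      Module.Flat A M → Module.FinitePresentation B (B ⊗[A] M) →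
      Module.FinitePresentation A M) := by
  have h : BaseChangeReflectsZero.{0} A B := fun M _ _ => hdet M _ _
  refine ⟨fun M N _ _ _ _ p hp => h.surjective_of_surjective_lTensor p hp,
    fun M _ _ _ => h.finite_of_finite_tensorProduct, fun M _ _ _ _ => h.finitePresentation_of_flat⟩
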